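/- arXiv:1012.4608 — 3 statements merged into one kernel-verified Lean document; each statement's English description precedes it below -/
import Mathlib

section
/- In a vector groupoid, if x, y ∈ α⁻¹(0) satisfy x − β(x) = y − β(y), then x = y; similarly, if x, y ∈ β⁻¹(0) satisfy x − α(x) = y − α(y), then x = y. -/
/-- A Brandt groupoid over a unit set `G0 ⊆ G`, with source `src`, target `tgt`,
partial multiplication `mul` (a pair `(x,y)` is composable iff `tgt x = src y`;
the value of `mul` on non-composable pairs is irrelevant) and inversion `inv`. -/
structure BrandtGroupoid (G : Type*) where
  G0 : Set G
  src : G → G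
  tgt : G → G
  src_mem : ∀ x, src x ∈ G0
  tgt_mem : ∀ x, tgt x ∈ G0
  src_surj : ∀ u ∈ G0, ∃ x, src x = u
  tgt_surj : ∀ u ∈ G0, ∃ x, tgt x = u
  mul : G → G → G
  inv : G → G
  -- (G2) units: `(src x, x)` and `(x, tgt x)` are composable and act as units
  src_unit_comp : ∀ x, tgt (src x) = src x
  tgt_unit_comp : ∀ x, src (tgt x) = tgt x
  unit_mul : ∀ x, mul (src x) x = x
  mul_unit : ∀ x, mul x (tgt x) = x
  -- (G3) inverses: `(x, inv x)` and `(inv x, x)` are composable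
  inv_comp : ∀ x, tgt x = src (inv x)
  inv_comp' : ∀ x, tgt (inv x) = src x
  inv_mul : ∀ x, mul (inv x) x = tgt x
  mul_inv : ∀ x, mul x (inv x) = src x
  -- (G1) associativity: if one of the two products is defined then so is the
  -- other and they are equal
  assoc_left : ∀ x y z, tgt x = src y → tgt (mul x y) = src z →
    tgt y = src z ∧ tgt x = src (mul y z) ∧ mul (mul x y) z = mul x (mul y z)
  assoc_right : ∀ x y z, tgt y = src z → tgt x = src (mul y z) →
    tgt x = src y ∧ tgt (mul x y) = src z ∧ mul (mul x y) z = mul x (mul y z)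

/-- A vector groupoid over a field `K`: a Brandt groupoid whose total space is a
`K`-vector space, with `G0` a subspace, linear structure maps, the identity
`x + x⁻¹ = α x + β x`, and the four compatibility axioms between the partial
multiplication and the linear structure. -/
structure VectorGroupoid (K V : Type*) [Field K] [AddCommGroup V] [Module K V]
    extends BrandtGroupoid V where
  zero_mem : (0 : V) ∈ G0
  add_mem : ∀ x y, x ∈ G0 → y ∈ G0 → x + y ∈ G0
  smul_mem : ∀ (k : K) (x), x ∈ G0 → k • x ∈ G0
  src_linear : IsLinearMap K src
  tgt_linear : IsLinearMap K tgt
  inv_linear : IsLinearMap K inv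
  add_inv : ∀ x, x + inv x = src x + tgt x
  compat1 : ∀ x y z, tgt x = src y → tgt x = src z →
    mul x (y + z - tgt x) = mul x y + mul x z - x
  compat2 : ∀ (k : K) (x y), tgt x = src y →
    mul x (k • y + (1 - k) • tgt x) = k • mul x y + (1 - k) • x
  compat3 : ∀ x y z, tgt y = src x → tgt z = src x →
    mul (y + z - src x) x = mul y x + mul z x - x
  compat4 : ∀ (k : K) (x y), tgt y = src x →
    mul (k • y + (1 - k) • src x) x = k • mul y x + (1 - k) • x

/-- In a vector groupoid: if `x, y ∈ α⁻¹(0)` and `x - β x = y - β y` then `x = y`;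
if `x, y ∈ β⁻¹(0)` and `x - α x = y - α y` then `x = y`. -/
theorem stmt_14 {K V : Type*} [Field K] [AddCommGroup V] [Module K V]
    (B : VectorGroupoid K V) :
    (∀ x y, B.src x = 0 → B.src y = 0 →
      x - B.tgt x = y - B.tgt y → x = y) ∧
    (∀ x y, B.tgt x = 0 → B.tgt y = 0 →
      x - B.src x = y - B.src y → x = y) := by
  constructor
  · intro x y hx hy h
    have h2 := congrArg B.src h
    rw [B.src_linear.map_sub, B.src_linear.map_sub, hx, hy,
      B.tgt_unit_comp, B.tgt_unit_comp] at h2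
    have ht : B.tgt x = B.tgt y := by
      have := h2
      abel_nf at this
      simpa using this
    have : x - B.tgt x + B.tgt x = y - B.tgt y + B.tgt y := by rw [h, ht]
    simpa using this
  · intro x y hx hy h
    have h2 := congrArg B.tgt h
    rw [B.tgt_linear.map_sub, B.tgt_linear.map_sub, hx, hy,
      B.src_unit_comp, B.src_unit_comp] at h2
    have ht : B.src x = B.src y := by
      abel_nf at h2
      simpa using h2
    have : x - B.src x + B.src x = y - B.src y + B.src y := by rw [h, ht]
    simpa using this
end

section
/- In a vector groupoid, the map t_β : α⁻¹(0) → β⁻¹(0) defined by t_β(x) = β(x) − x is a linear isomorphism, with inverse t_α : β⁻¹(0) → α⁻¹(0), t_α(x) = α(x) − x. -/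
/-- In a vector groupoid, `t_β : α⁻¹(0) → β⁻¹(0)`, `t_β x = β x - x` is a linear
isomorphism, with inverse `t_α : β⁻¹(0) → α⁻¹(0)`, `t_α x = α x - x`. -/
theorem stmt_15 {K V : Type*} [Field K] [AddCommGroup V] [Module K V]
    (B : VectorGroupoid K V) :
    IsLinearMap K (fun x => B.tgt x - x) ∧
    Set.BijOn (fun x => B.tgt x - x) {x | B.src x = 0} {x | B.tgt x = 0} ∧
    (∀ x, B.src x = 0 → B.src (B.tgt x - x) - (B.tgt x - x) = x) ∧
    (∀ x, B.tgt x = 0 → B.tgt (B.src x - x) - (B.src x - x) = x) := by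
  have hsl := B.src_linear
  have htl := B.tgt_linear
  have htt : ∀ x, B.tgt (B.tgt x) = B.tgt x := fun x => by
    rw [B.inv_comp x, B.src_unit_comp]
  have hss : ∀ x, B.src (B.src x) = B.src x := fun x => by
    rw [← B.inv_comp' x, B.tgt_unit_comp]
  have key1 : ∀ x, B.src (B.tgt x - x) - (B.tgt x - x) = x - B.src x := fun x => by
    rw [hsl.map_sub, B.tgt_unit_comp]; abel
  have key2 : ∀ x, B.tgt (B.src x - x) - (B.src x - x) = x - B.tgt x := fun x => by
    rw [htl.map_sub, B.src_unit_comp]; abel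
  refine ⟨⟨fun x y => by rw [htl.map_add]; abel,
          fun c x => by rw [htl.map_smul, smul_sub]⟩, ?_, ?_, ?_⟩
  · refine ⟨fun x hx => ?_, fun x hx y hy h => ?_, fun y hy => ?_⟩
    · show B.tgt (B.tgt x - x) = 0
      rw [htl.map_sub, htt, sub_self]
    · have h' : B.tgt x - x = B.tgt y - y := h
      have e1 := key1 x
      rw [h', key1 y] at e1
      have hx0 : B.src x = 0 := hx
      have hy0 : B.src y = 0 := hy
      rw [hx0, hy0, sub_zero, sub_zero] at e1
      exact e1.symm
    · refine ⟨B.src y - y, ?_, ?_⟩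
      · show B.src (B.src y - y) = 0
        rw [hsl.map_sub, hss, sub_self]
      · show B.tgt (B.src y - y) - (B.src y - y) = y
        have hy0 : B.tgt y = 0 := hy
        rw [key2 y, hy0, sub_zero]
  · intro x hx; rw [key1 x, hx, sub_zero]
  · intro x hx; rw [key2 x, hx, sub_zero]
end

section
/- Let V be a vector groupoid over K and u ∈ V₀. The isotropy group V(u) with operations x ⊞ y = x + y − u, k ⊠ x = kx + (1−k)u, the restrictions of α, β, ι, and the multiplication x ⊡ y = (x−u)⊙(y−u) + u, is itself a vector groupoid over K with single unit u. -/
/-- For a unit `u ∈ V₀` of a vector groupoid, the isotropy group `V(u)` with the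
vector space operations `x ⊞ y = x + y - u`, `k ⊠ x = k•x + (1-k)•u`, the
restrictions of `α`, `β`, `ι`, and the multiplication
`x ⊡ y = (x-u) ⊙ (y-u) + u`, is a vector groupoid over `K` with single unit `u`. -/
theorem stmt_17 {K V : Type*} [Field K] [AddCommGroup V] [Module K V]
    (B : VectorGroupoid K V) (u : V) (hu : u ∈ B.G0) :
    let S : Set V := {x | B.src x = u ∧ B.tgt x = u}
    let padd : V → V → V := fun x y => x + y - u
    let psmul : K → V → V := fun k x => k • x + (1 - k) • u
    let pmul : V → V → V := fun x y => B.mul (x - u) (y - u) + u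
    -- closure of the operations
    (∀ x ∈ S, ∀ y ∈ S, padd x y ∈ S) ∧
    (∀ (k : K), ∀ x ∈ S, psmul k x ∈ S) ∧
    (∀ x ∈ S, ∀ y ∈ S, pmul x y ∈ S) ∧
    (∀ x ∈ S, B.inv x ∈ S) ∧
    -- restricted source and target are constantly equal to the single unit `u`
    (∀ x ∈ S, B.src x = u ∧ B.tgt x = u) ∧
    -- groupoid axioms (every pair is composable since there is a single unit)
    (∀ x ∈ S, ∀ y ∈ S, ∀ z ∈ S, pmul (pmul x y) z = pmul x (pmul y z)) ∧
    (∀ x ∈ S, pmul u x = x ∧ pmul x u = x) ∧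
    (∀ x ∈ S, pmul (B.inv x) x = u ∧ pmul x (B.inv x) = u) ∧
    -- inversion is linear for the new vector space structure and satisfies
    -- `x ⊞ ι x = α x ⊞ β x (= u)`
    (∀ x ∈ S, ∀ y ∈ S, B.inv (padd x y) = padd (B.inv x) (B.inv y)) ∧
    (∀ (k : K), ∀ x ∈ S, B.inv (psmul k x) = psmul k (B.inv x)) ∧
    (∀ x ∈ S, padd x (B.inv x) = u) ∧
    -- the four compatibility axioms of a vector groupoid
    (∀ x ∈ S, ∀ y ∈ S, ∀ z ∈ S, pmul x (padd y z) = pmul x y + pmul x z - x) ∧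
    (∀ (k : K), ∀ x ∈ S, ∀ y ∈ S,
       pmul x (k • y + (1 - k) • u) = k • pmul x y + (1 - k) • x) ∧
    (∀ x ∈ S, ∀ y ∈ S, ∀ z ∈ S, pmul (padd y z) x = pmul y x + pmul z x - x) ∧
    (∀ (k : K), ∀ x ∈ S, ∀ y ∈ S,
       pmul (k • y + (1 - k) • u) x = k • pmul y x + (1 - k) • x) := by

  intro S padd psmul pmul
  have hmemS : ∀ x, x ∈ S ↔ B.src x = u ∧ B.tgt x = u := fun x => Iff.rfl
  have hsadd : ∀ x y, B.src (x + y) = B.src x + B.src y := B.src_linear.map_add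
  have hssmul : ∀ (k : K) x, B.src (k • x) = k • B.src x := fun k x => B.src_linear.map_smul k x
  have hssub : ∀ x y, B.src (x - y) = B.src x - B.src y :=
    (IsLinearMap.mk' _ B.src_linear).map_sub
  have htadd : ∀ x y, B.tgt (x + y) = B.tgt x + B.tgt y := B.tgt_linear.map_add
  have htsmul : ∀ (k : K) x, B.tgt (k • x) = k • B.tgt x := fun k x => B.tgt_linear.map_smul k x
  have htsub : ∀ x y, B.tgt (x - y) = B.tgt x - B.tgt y :=
    (IsLinearMap.mk' _ B.tgt_linear).map_sub
  have hiadd : ∀ x y, B.inv (x + y) = B.inv x + B.inv y := B.inv_linear.map_add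
  have hismul : ∀ (k : K) x, B.inv (k • x) = k • B.inv x := fun k x => B.inv_linear.map_smul k x
  have hisub : ∀ x y, B.inv (x - y) = B.inv x - B.inv y :=
    (IsLinearMap.mk' _ B.inv_linear).map_sub
  -- u is fixed by src, tgt, inv
  have hsu : B.src u = u := by
    obtain ⟨x, hx⟩ := B.tgt_surj u hu
    have := B.tgt_unit_comp x; rwa [hx] at this
  have htu : B.tgt u = u := by
    obtain ⟨x, hx⟩ := B.src_surj u hu
    have := B.src_unit_comp x; rwa [hx] at this
  have hiu : B.inv u = u := by
    have h := B.add_inv u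
    rw [hsu, htu] at h
    exact add_left_cancel h
  -- source/target of elements of S shifted by u
  have hsrc0 : ∀ x ∈ S, B.src (x - u) = 0 := fun x hx => by
    rw [hssub, hx.1, hsu, sub_self]
  have htgt0 : ∀ x ∈ S, B.tgt (x - u) = 0 := fun x hx => by
    rw [htsub, hx.2, htu, sub_self]
  have hcomp : ∀ x ∈ S, ∀ y ∈ S, B.tgt (x - u) = B.src (y - u) := fun x hx y hy => by
    rw [htgt0 x hx, hsrc0 y hy]
  -- source/target of products
  have hsrc_mul : ∀ a b, B.tgt a = B.src b → B.src (B.mul a b) = B.src a := by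
    intro a b h
    have h2 : B.tgt (B.mul (B.src a) a) = B.src b := by rw [B.unit_mul]; exact h
    obtain ⟨-, h3, -⟩ := B.assoc_left (B.src a) a b (B.src_unit_comp a) h2
    rw [← h3, B.src_unit_comp]
  have htgt_mul : ∀ a b, B.tgt a = B.src b → B.tgt (B.mul a b) = B.tgt b := by
    intro a b h
    have h1 : B.tgt b = B.src (B.tgt b) := (B.tgt_unit_comp b).symm
    have h2 : B.tgt a = B.src (B.mul b (B.tgt b)) := by rw [B.mul_unit]; exact h
    obtain ⟨-, h3, -⟩ := B.assoc_right a b (B.tgt b) h1 h2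
    rw [h3, B.tgt_unit_comp]
  -- closure of pmul
  have hpmulS : ∀ x ∈ S, ∀ y ∈ S, pmul x y ∈ S := by
    intro x hx y hy
    constructor
    · show B.src (B.mul (x - u) (y - u) + u) = u
      rw [hsadd, hsu, hsrc_mul _ _ (hcomp x hx y hy), hsrc0 x hx, zero_add]
    · show B.tgt (B.mul (x - u) (y - u) + u) = u
      rw [htadd, htu, htgt_mul _ _ (hcomp x hx y hy), htgt0 y hy, zero_add]
  refine ⟨?_, ?_, hpmulS, ?_, fun x hx => hx, ?_, ?_, ?_, ?_, ?_, ?_, ?_, ?_, ?_, ?_⟩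
  · -- padd closure
    intro x hx y hy
    constructor
    · show B.src (x + y - u) = u
      rw [hssub, hsadd, hx.1, hy.1, hsu]; abel
    · show B.tgt (x + y - u) = u
      rw [htsub, htadd, hx.2, hy.2, htu]; abel
  · -- psmul closure
    intro k x hx
    constructor
    · show B.src (k • x + (1 - k) • u) = u
      rw [hsadd, hssmul, hssmul, hx.1, hsu, ← add_smul]
      ring_nf; rw [one_smul]
    · show B.tgt (k • x + (1 - k) • u) = u
      rw [htadd, htsmul, htsmul, hx.2, htu, ← add_smul]
      ring_nf; rw [one_smul]
  · -- inv closure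
    intro x hx
    exact ⟨by rw [← B.inv_comp, hx.2], by rw [B.inv_comp', hx.1]⟩
  · -- associativity
    intro x hx y hy z hz
    show B.mul (B.mul (x - u) (y - u) + u - u) (z - u) + u
        = B.mul (x - u) (B.mul (y - u) (z - u) + u - u) + u
    rw [add_sub_cancel_right, add_sub_cancel_right]
    have h2 : B.tgt (B.mul (x - u) (y - u)) = B.src (z - u) := by
      rw [htgt_mul _ _ (hcomp x hx y hy), htgt0 y hy, hsrc0 z hz]
    obtain ⟨-, -, h3⟩ := B.assoc_left (x - u) (y - u) (z - u) (hcomp x hx y hy) h2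
    rw [h3]
  · -- units
    intro x hx
    constructor
    · show B.mul (u - u) (x - u) + u = x
      rw [sub_self, ← hsrc0 x hx, B.unit_mul, sub_add_cancel]
    · show B.mul (x - u) (u - u) + u = x
      rw [sub_self, ← htgt0 x hx, B.mul_unit, sub_add_cancel]
  · -- inverses
    intro x hx
    have hix : B.inv x - u = B.inv (x - u) := by rw [hisub, hiu]
    constructor
    · show B.mul (B.inv x - u) (x - u) + u = u
      rw [hix, B.inv_mul, htgt0 x hx, zero_add]
    · show B.mul (x - u) (B.inv x - u) + u = u
      rw [hix, B.mul_inv, hsrc0 x hx, zero_add]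
  · -- inv is additive
    intro x hx y hy
    show B.inv (x + y - u) = B.inv x + B.inv y - u
    rw [hisub, hiadd, hiu]
  · -- inv commutes with psmul
    intro k x hx
    show B.inv (k • x + (1 - k) • u) = k • B.inv x + (1 - k) • u
    rw [hiadd, hismul, hismul, hiu]
  · -- x ⊞ ι x = u
    intro x hx
    show x + B.inv x - u = u
    rw [B.add_inv, hx.1, hx.2]; abel
  · -- compat1
    intro x hx y hy z hz
    show B.mul (x - u) (y + z - u - u) + u
        = (B.mul (x - u) (y - u) + u) + (B.mul (x - u) (z - u) + u) - x
    have key := B.compat1 (x - u) (y - u) (z - u) (hcomp x hx y hy) (hcomp x hx z hz)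
    rw [htgt0 x hx, sub_zero] at key
    have harg : y + z - u - u = y - u + (z - u) := by abel
    rw [harg, key]; abel
  · -- compat2
    intro k x hx y hy
    show B.mul (x - u) (k • y + (1 - k) • u - u) + u
        = k • (B.mul (x - u) (y - u) + u) + (1 - k) • x
    have key := B.compat2 k (x - u) (y - u) (hcomp x hx y hy)
    rw [htgt0 x hx, smul_zero, add_zero] at key
    have harg : k • y + (1 - k) • u - u = k • (y - u) := by
      rw [smul_sub, sub_smul, one_smul]; abel
    rw [harg, key]; module
  · -- compat3
    intro x hx y hy z hz
    show B.mul (y + z - u - u) (x - u) + u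
        = (B.mul (y - u) (x - u) + u) + (B.mul (z - u) (x - u) + u) - x
    have key := B.compat3 (x - u) (y - u) (z - u) (hcomp y hy x hx) (hcomp z hz x hx)
    rw [hsrc0 x hx, sub_zero] at key
    have harg : y + z - u - u = y - u + (z - u) := by abel
    rw [harg, key]; abel
  · -- compat4
    intro k x hx y hy
    show B.mul (k • y + (1 - k) • u - u) (x - u) + u
        = k • (B.mul (y - u) (x - u) + u) + (1 - k) • x
    have key := B.compat4 k (x - u) (y - u) (hcomp y hy x hx)
    rw [hsrc0 x hx, smul_zero, add_zero] at key
    have harg : k • y + (1 - k) • u - u = k • (y - u) := by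
      rw [smul_sub, sub_smul, one_smul]; abel
    rw [harg, key]; module
end
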